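/- Let columns C_1, C_2, ... be i.i.d. uniform on F_2^k and requests R_1, R_2, ... be i.i.d. uniform on the nonzero vectors of F_2^k, independent of the columns. Let L_n be the maximum number of requests among R_1, ..., R_n that can be served (as a sub-multiset) from columns C_1, ..., C_n by disjoint recovery sets. Then L_n / n → 1 − 2^{-k} almost surely. -/

import Mathlib

open MeasureTheory ProbabilityTheory Filter
open scoped ENNReal

/-- `L(G; R)`: the maximum number of requests among `R 0, …, R (n-1)` that can
be served from the column multiset `G` by pairwise disjoint recovery sets. -/
noncomputable def Lpar {k : ℕ} (G : Multiset (Fin k → ZMod 2)) {n : ℕ}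
    (R : Fin n → (Fin k → ZMod 2)) : ℕ :=
  sSup {m : ℕ | ∃ I : Finset (Fin n), I.card = m ∧
    ∃ S : Fin n → Multiset (Fin k → ZMod 2),
      (∑ i ∈ I, S i) ≤ G ∧ ∀ i ∈ I, (S i).sum = R i}

/-!
A request equal to one of the columns can be served by that column alone, so `L_n` is at least
`∑ v, min (#{i < n | R i = v}) (#{i < n | C i = v})`; conversely every recovery set of a nonzero
request contains a nonzero column, so `L_n` is at most the number of nonzero columns. By the
strong law of large numbers the two bounds, divided by `n`, converge almost surely to
`∑ v, min (ℙ(R₀ = v)) (ℙ(C₀ = v))` and `ℙ(C₀ ≠ 0)`. Both equal `1 - 2⁻ᵏ`, because the law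
of `R₀` vanishes at `0` and dominates the uniform law elsewhere.
-/

theorem Multiset.exists_le_map_eq {α β : Type*} {f : α → β} {s : Multiset α} {t : Multiset β}
    (h : t ≤ s.map f) : ∃ u ≤ s, u.map f = t := by
  induction s using Multiset.induction_on generalizing t with
  | empty => exact ⟨0, le_rfl, (Multiset.le_zero.1 h).symm⟩
  | cons a s ih =>
    rw [Multiset.map_cons] at h
    by_cases ha : f a ∈ t
    · obtain ⟨t', rfl⟩ := Multiset.exists_cons_of_mem ha
      obtain ⟨u, hus, rfl⟩ := ih ((Multiset.cons_le_cons_iff _).1 h)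
      exact ⟨a ::ₘ u, Multiset.cons_le_cons a hus, Multiset.map_cons f a u⟩
    · obtain ⟨u, hus, rfl⟩ := ih ((Multiset.le_cons_of_notMem ha).1 h)
      exact ⟨u, hus.trans (Multiset.le_cons_self s a), rfl⟩

theorem Multiset.card_inter_eq_sum_min_count {α : Type*} [Fintype α] [DecidableEq α]
    (s t : Multiset α) : (s ∩ t).card = ∑ a, min (s.count a) (t.count a) := by
  simp only [← Multiset.count_inter]
  exact (Multiset.sum_count_eq_card fun a _ => Finset.mem_univ a).symm

section Lpar

variable {k n : ℕ} {G : Multiset (Fin k → ZMod 2)} {R : Fin n → Fin k → ZMod 2}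

lemma le_Lpar (I : Finset (Fin n)) (S : Fin n → Multiset (Fin k → ZMod 2))
    (hG : ∑ i ∈ I, S i ≤ G) (hS : ∀ i ∈ I, (S i).sum = R i) : I.card ≤ Lpar G R :=
  le_csSup ⟨n, by rintro m ⟨J, rfl, -⟩; simpa using J.card_le_univ⟩ ⟨I, rfl, S, hG, hS⟩

lemma Lpar_le {m : ℕ} (h : ∀ (I : Finset (Fin n)) (S : Fin n → Multiset (Fin k → ZMod 2)),
      ∑ i ∈ I, S i ≤ G → (∀ i ∈ I, (S i).sum = R i) → I.card ≤ m) :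
    Lpar G R ≤ m :=
  csSup_le ⟨0, ∅, rfl, 0, by simp⟩ (by rintro _ ⟨I, rfl, S, hG, hS⟩; exact h I S hG hS)

lemma card_map_inter_le_Lpar : (Finset.univ.val.map R ∩ G).card ≤ Lpar G R := by
  obtain ⟨u, hu, hmap⟩ :=
    Multiset.exists_le_map_eq (Multiset.inter_le_left (s := Finset.univ.val.map R) (t := G))
  let I : Finset (Fin n) := ⟨u, Multiset.nodup_of_le hu Finset.univ.nodup⟩
  have hI : ∑ i ∈ I, ({R i} : Multiset (Fin k → ZMod 2)) = Finset.univ.val.map R ∩ G := by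
    rw [← hmap, Finset.sum_eq_multiset_sum, ← Multiset.sum_map_singleton (u.map R),
      Multiset.map_map]
    rfl
  calc (Finset.univ.val.map R ∩ G).card = I.card := by rw [← hmap, Multiset.card_map]; rfl
    _ ≤ Lpar G R :=
      le_Lpar I _ (hI ▸ Multiset.inter_le_right) fun i _ => Multiset.sum_singleton _

lemma Lpar_le_countP_ne_zero (hR : ∀ i, R i ≠ 0) : Lpar G R ≤ G.countP (· ≠ 0) := by
  refine Lpar_le fun I S hG hS => ?_
  have hne : ∀ i ∈ I, 1 ≤ (S i).countP (· ≠ 0) := fun i hi => by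
    rw [Nat.one_le_iff_ne_zero, Ne, Multiset.countP_eq_zero]
    exact fun h => hR i (hS i hi ▸ Multiset.sum_eq_zero fun x hx => not_not.1 (h x hx))
  calc I.card = ∑ i ∈ I, 1 := Finset.card_eq_sum_ones I
    _ ≤ ∑ i ∈ I, (S i).countP (· ≠ 0) := Finset.sum_le_sum hne
    _ = (∑ i ∈ I, S i).countP (· ≠ 0) := (map_sum (Multiset.countPAddMonoidHom _) S I).symm
    _ ≤ G.countP (· ≠ 0) := Multiset.countP_le_of_le _ hG

end Lpar

lemma tendsto_Lpar_div {k : ℕ} {c r : ℕ → Fin k → ZMod 2} (hr0 : ∀ i, r i ≠ 0)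
    {pc pr : (Fin k → ZMod 2) → ℝ} {ℓ : ℝ}
    (hc : ∀ v, Tendsto (fun n : ℕ =>
      ((↑(List.ofFn fun i : Fin n => c i) : Multiset (Fin k → ZMod 2)).count v : ℝ) / n)
      atTop (nhds (pc v)))
    (hr : ∀ v, Tendsto (fun n : ℕ =>
      ((↑(List.ofFn fun i : Fin n => r i) : Multiset (Fin k → ZMod 2)).count v : ℝ) / n)
      atTop (nhds (pr v)))
    (hc0 : Tendsto (fun n : ℕ =>
      ((↑(List.ofFn fun i : Fin n => c i) : Multiset (Fin k → ZMod 2)).countP (· ≠ 0) : ℝ) / n)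
      atTop (nhds ℓ))
    (hℓ : ∑ v, min (pr v) (pc v) = ℓ) :
    Tendsto (fun n : ℕ =>
      (Lpar (↑(List.ofFn fun i : Fin n => c i)) (fun i : Fin n => r i) : ℝ) / n)
      atTop (nhds ℓ) := by
  refine tendsto_of_tendsto_of_tendsto_of_le_of_le
    (hℓ ▸ tendsto_finsetSum _ fun v _ => (hr v).min (hc v)) hc0 (fun n => ?_) (fun n => ?_)
  · rw [← Fin.univ_val_map, ← Fin.univ_val_map]
    calc ∑ v, min ((Multiset.count v (Finset.univ.val.map fun i : Fin n => r i) : ℝ) / n)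
            ((Multiset.count v (Finset.univ.val.map fun i : Fin n => c i) : ℝ) / n)
        = (((Finset.univ.val.map fun i : Fin n => r i) ∩
            Finset.univ.val.map fun i : Fin n => c i).card : ℝ) / n := by
          rw [Multiset.card_inter_eq_sum_min_count, Nat.cast_sum, Finset.sum_div]
          simp only [Nat.cast_min, min_div_div_right n.cast_nonneg]
      _ ≤ _ := by gcongr; exact card_map_inter_le_Lpar
  · gcongr
    exact Lpar_le_countP_ne_zero fun i => hr0 i

lemma identDistrib_of_forall_measure_preimage_singleton {α β E : Type*} [MeasurableSpace α]
    [MeasurableSpace β] [MeasurableSpace E] [MeasurableSingletonClass E] [Countable E]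
    {μ : Measure α} {ν : Measure β} {X : α → E} {Y : β → E} (hX : Measurable X)
    (hY : Measurable Y) (h : ∀ v, μ (X ⁻¹' {v}) = ν (Y ⁻¹' {v})) : IdentDistrib X Y μ ν where
  aemeasurable_fst := hX.aemeasurable
  aemeasurable_snd := hY.aemeasurable
  map_eq := Measure.ext_iff_singleton.2 fun v => by
    rw [Measure.map_apply hX (measurableSet_singleton v),
      Measure.map_apply hY (measurableSet_singleton v), h]

section StrongLaw

variable {Ω E : Type*} [MeasurableSpace Ω] [MeasurableSpace E] {μ : Measure Ω}
  [IsFiniteMeasure μ] {f : ℕ → Ω → E}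

lemma ae_tendsto_countP_ofFn_div (hf : ∀ i, Measurable (f i))
    (hindep : Pairwise fun i j => IndepFun (f i) (f j) μ)
    (hident : ∀ i, IdentDistrib (f i) (f 0) μ μ) {p : E → Prop} [DecidablePred p]
    (hp : MeasurableSet {x | p x}) :
    ∀ᵐ ω ∂μ, Tendsto (fun n : ℕ =>
      ((↑(List.ofFn fun i : Fin n => f i ω) : Multiset E).countP p : ℝ) / n)
      atTop (nhds (μ.real (f 0 ⁻¹' {x | p x}))) := by
  set g : E → ℝ := {x | p x}.indicator 1
  have hg : Measurable g := measurable_const.indicator hp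
  have hg0 : g ∘ f 0 = (f 0 ⁻¹' {x | p x}).indicator 1 := by
    ext ω; simp [g, Set.indicator_apply]
  have hmean : μ[g ∘ f 0] = μ.real (f 0 ⁻¹' {x | p x}) := by
    rw [hg0, integral_indicator_one (hf 0 hp)]
  have hint : Integrable (g ∘ f 0) μ := hg0 ▸ (integrable_const 1).indicator (hf 0 hp)
  filter_upwards [strong_law_ae_real (fun i => g ∘ f i) hint
    (fun i j hij => (hindep hij).comp hg hg) (fun i => (hident i).comp hg)] with ω hω
  rw [← hmean]
  convert hω using 3 with n
  rw [← Fin.univ_val_map, Multiset.countP_map,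
    ← Fin.sum_univ_eq_sum_range (fun i => (g ∘ f i) ω)]
  simp only [Function.comp_apply, Set.indicator_apply, Set.mem_ofPred_eq, Pi.one_apply,
    Finset.sum_boole, g]
  rfl

lemma ae_tendsto_count_ofFn_div [DecidableEq E] [MeasurableSingletonClass E]
    (hf : ∀ i, Measurable (f i)) (hindep : Pairwise fun i j => IndepFun (f i) (f j) μ)
    (hident : ∀ i, IdentDistrib (f i) (f 0) μ μ) (v : E) :
    ∀ᵐ ω ∂μ, Tendsto (fun n : ℕ =>
      ((↑(List.ofFn fun i : Fin n => f i ω) : Multiset E).count v : ℝ) / n)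
      atTop (nhds (μ.real (f 0 ⁻¹' {v}))) := by
  have hv : {x | v = x} = {v} := Set.ext fun _ => eq_comm
  have h := ae_tendsto_countP_ofFn_div hf hindep hident (p := (v = ·))
    (by rw [hv]; exact measurableSet_singleton v)
  rw [hv] at h
  exact h

end StrongLaw

lemma sum_min_measureReal_preimage_singleton_eq {Ω E : Type*} [MeasurableSpace Ω] [Fintype E]
    [MeasurableSpace E] [MeasurableSingletonClass E] {μ : Measure Ω} [IsFiniteMeasure μ]
    {X Y : Ω → E} (hX : Measurable X) (a : E) (hY : ∀ ω, Y ω ≠ a)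
    (hle : ∀ v ≠ a, μ (X ⁻¹' {v}) ≤ μ (Y ⁻¹' {v})) :
    ∑ v, min (μ.real (Y ⁻¹' {v})) (μ.real (X ⁻¹' {v})) = μ.real {ω | X ω ≠ a} := by
  classical
  have hYa : Y ⁻¹' {a} = ∅ := Set.eq_empty_of_forall_notMem fun ω => hY ω
  rw [← Finset.add_sum_erase _ _ (Finset.mem_univ a), hYa, measureReal_empty,
    min_eq_left measureReal_nonneg, zero_add]
  calc ∑ v ∈ Finset.univ.erase a, min (μ.real (Y ⁻¹' {v})) (μ.real (X ⁻¹' {v}))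
      = ∑ v ∈ Finset.univ.erase a, μ.real (X ⁻¹' {v}) :=
        Finset.sum_congr rfl fun v hv => min_eq_right <|
          ENNReal.toReal_mono (measure_ne_top _ _) (hle v (Finset.ne_of_mem_erase hv))
    _ = μ.real (X ⁻¹' ↑(Finset.univ.erase a)) :=
        sum_measureReal_preimage_singleton _ fun v _ => hX (measurableSet_singleton v)
    _ = μ.real {ω | X ω ≠ a} := by congr 1; ext ω; simp

/-- columns i.i.d. uniform on `F_2^k`, requests i.i.d. uniform on
the nonzero vectors, the two processes independent. Then `L_n / n → 1 − 2^{-k}`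
almost surely, where `L_n` is the maximum number of the first `n` requests
servable from the first `n` columns by disjoint recovery sets. -/
theorem Lpar_div_n_tendsto (k : ℕ)
    {Ω : Type*} [MeasureSpace Ω] [IsProbabilityMeasure (ℙ : Measure Ω)]
    (C : ℕ → Ω → (Fin k → ZMod 2)) (R : ℕ → Ω → (Fin k → ZMod 2))
    (hmC : ∀ i, Measurable (C i)) (hmR : ∀ i, Measurable (R i))
    (hindep : iIndepFun (Sum.elim C R) ℙ)
    (hunifC : ∀ i (v : Fin k → ZMod 2), ℙ {ω | C i ω = v} = ((2 : ℝ≥0∞) ^ k)⁻¹)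
    (hR0 : ∀ i ω, R i ω ≠ 0)
    (hunifR : ∀ i (v : Fin k → ZMod 2), v ≠ 0 →
      ℙ {ω | R i ω = v} = ((2 : ℝ≥0∞) ^ k - 1)⁻¹) :
    ∀ᵐ ω ∂ℙ, Tendsto
      (fun n : ℕ =>
        (Lpar ((List.ofFn fun i : Fin n => C (i : ℕ) ω : List (Fin k → ZMod 2)) :
            Multiset (Fin k → ZMod 2)) (fun i : Fin n => R (i : ℕ) ω) : ℝ) / n)
      atTop (nhds (1 - 1 / 2 ^ k)) := by
  have hindC : Pairwise fun i j => IndepFun (C i) (C j) ℙ := fun i j hij =>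
    hindep.indepFun (Sum.inl_injective.ne hij)
  have hindR : Pairwise fun i j => IndepFun (R i) (R j) ℙ := fun i j hij =>
    hindep.indepFun (Sum.inr_injective.ne hij)
  have hlawC : ∀ i, IdentDistrib (C i) (C 0) ℙ ℙ := fun i =>
    identDistrib_of_forall_measure_preimage_singleton (hmC i) (hmC 0) fun v =>
      (hunifC i v).trans (hunifC 0 v).symm
  have hlawR : ∀ i, IdentDistrib (R i) (R 0) ℙ ℙ := fun i =>
    identDistrib_of_forall_measure_preimage_singleton (hmR i) (hmR 0) fun v => by
      rcases eq_or_ne v 0 with rfl | hv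
      · simp [Set.preimage, hR0]
      · exact (hunifR i v hv).trans (hunifR 0 v hv).symm
  have hoverlap : ∑ v, min ((ℙ : Measure Ω).real (R 0 ⁻¹' {v}))
      ((ℙ : Measure Ω).real (C 0 ⁻¹' {v})) = (ℙ : Measure Ω).real {ω | C 0 ω ≠ 0} :=
    sum_min_measureReal_preimage_singleton_eq (hmC 0) 0 (hR0 0) fun v hv =>
      (hunifC 0 v).trans_le <| (ENNReal.inv_le_inv.2 tsub_le_self).trans_eq (hunifR 0 v hv).symm
  have hnonzero : (ℙ : Measure Ω).real {ω | C 0 ω ≠ 0} = 1 - 1 / 2 ^ k := by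
    have h0 : MeasurableSet {ω | C 0 ω = 0} := hmC 0 (measurableSet_singleton 0)
    rw [← Set.compl_ofPred, probReal_compl_eq_one_sub h0, measureReal_def, hunifC 0 0]
    simp
  filter_upwards [ae_all_iff.2 (ae_tendsto_count_ofFn_div hmC hindC hlawC),
    ae_all_iff.2 (ae_tendsto_count_ofFn_div hmR hindR hlawR),
    ae_tendsto_countP_ofFn_div hmC hindC hlawC (p := (· ≠ 0))
      (measurableSet_singleton 0).compl] with ω hCω hRω hC0ω
  rw [← hnonzero]
  exact tendsto_Lpar_div (c := fun i => C i ω) (r := fun i => R i ω) (hR0 · ω)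
    hCω hRω hC0ω hoverlap
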